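/- Let A be an irreducible N×N matrix over ℝ ∪ {+∞} whose graph contains at least one circuit, λ its minimum average circuit weight, Â the normalised matrix Â_{ij} = A_{ij} − λ, Â* = ⊖_{k=0}^{N−1} Â^{⊙k} its Kleene star, and let V^cr be the (nonempty) set of nodes lying on circuits of G(A) of average weight λ. Then for every finite vector v ∈ ℝ^N with min_j (A_{ij} + v_j) = λ + v_i for all i, there exist coefficients a_i ∈ ℝ for i ∈ V^cr such that v_k = min_{i ∈ V^cr} (a_i + (Â*)_{ki}) for all k; that is, every min-plus eigenvector of A is a tropical linear combination of the critical columns of Â*. -/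

import Mathlib

open scoped BigOperators

/-- Min-plus product of matrices over ℝ ∪ {+∞}: `(A ⊙ B) i j = min_k (A i k + B k j)`. -/
def mpMul {N : ℕ} (A B : Matrix (Fin N) (Fin N) (WithTop ℝ)) :
    Matrix (Fin N) (Fin N) (WithTop ℝ) :=
  fun i j => Finset.univ.inf fun k => A i k + B k j

/-- The min-plus identity matrix: `0` on the diagonal, `+∞` elsewhere. -/
def mpId {N : ℕ} : Matrix (Fin N) (Fin N) (WithTop ℝ) :=
  fun i j => if i = j then 0 else ⊤

/-- Min-plus matrix powers. -/
def mpPow {N : ℕ} (A : Matrix (Fin N) (Fin N) (WithTop ℝ)) : ℕ → Matrix (Fin N) (Fin N) (WithTop ℝ)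
  | 0 => mpId
  | k + 1 => mpMul A (mpPow A k)

/-- `IsWalk A l v j i` : `v` is a walk of length `l` from node `j` to node `i` in the
weighted digraph `G(A)`, where there is an edge from `b` to `a` whenever `A a b ≠ +∞`. -/
def IsWalk {N : ℕ} (A : Matrix (Fin N) (Fin N) (WithTop ℝ)) (l : ℕ)
    (v : Fin (l + 1) → Fin N) (j i : Fin N) : Prop :=
  v 0 = j ∧ v (Fin.last l) = i ∧ ∀ t : Fin l, A (v t.succ) (v t.castSucc) ≠ ⊤

/-- The weight of a walk: the sum of the weights of its edges. -/
def walkWeight {N : ℕ} (A : Matrix (Fin N) (Fin N) (WithTop ℝ)) (l : ℕ)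
    (v : Fin (l + 1) → Fin N) : WithTop ℝ :=
  ∑ t : Fin l, A (v t.succ) (v t.castSucc)

def normalised {N : ℕ} (A : Matrix (Fin N) (Fin N) (WithTop ℝ)) (lam : ℝ) :
    Matrix (Fin N) (Fin N) (WithTop ℝ) :=
  fun i j => A i j + ((-lam : ℝ) : WithTop ℝ)

def kleeneStar {N : ℕ} (B : Matrix (Fin N) (Fin N) (WithTop ℝ)) :
    Matrix (Fin N) (Fin N) (WithTop ℝ) :=
  fun i j => (Finset.range N).inf fun k => mpPow B k i j

/-- A node is critical if it lies on a circuit of average weight `lam`. -/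
def IsCriticalNode {N : ℕ} (A : Matrix (Fin N) (Fin N) (WithTop ℝ)) (lam : ℝ)
    (i : Fin N) : Prop :=
  ∃ (m : ℕ) (c : Fin (m + 1) → Fin N), 1 ≤ m ∧ IsWalk A m c (c 0) (c 0) ∧
    walkWeight A m c = (((m : ℝ) * lam : ℝ) : WithTop ℝ) ∧ ∃ t : Fin (m + 1), c t = i

/-!
Take `a = v`. The eigen-equation makes `v` a sub-eigenvector of `Â` (`v i ≤ Â i j + v j`), and
iterating this gives `v k ≤ Â* k i + v i` for every `i`. Conversely, call an edge tight when it
attains the minimum in the eigen-equation, `A i j + v j = λ + v i`. Every node has a tight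
incoming edge, so following tight edges backwards from `k` revisits some node within `N` steps.
Along tight edges the weight telescopes: the closed part is a circuit of average weight `λ`, so
the repeated node `i` is critical, and the walk from `i` to `k` has `Â`-weight `v k - v i`, whence
`Â* k i + v i ≤ v k`.
-/

theorem WithTop.finset_inf_add {ι α : Type*} [AddCommMonoid α] [LinearOrder α]
    [IsOrderedAddMonoid α] (s : Finset ι) (f : ι → WithTop α) (c : WithTop α) :
    s.inf f + c = s.inf fun i => f i + c :=
  Finset.apply_inf_eq_inf_comp_of_linearOrder (· + c) (fun _ _ h => add_le_add_left h c)
    (WithTop.top_add c)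

theorem Fintype.exists_lt_le_card_apply_eq {α : Type*} [Fintype α] (x : ℕ → α) :
    ∃ s t, s < t ∧ t ≤ Fintype.card α ∧ x s = x t := by
  obtain ⟨a, ha, b, hb, hab, hxab⟩ := Finset.exists_ne_map_eq_of_card_lt_of_maps_to
    (s := Finset.range (Fintype.card α + 1)) (t := Finset.univ) (by simp)
    (fun n _ => Finset.mem_coe.2 (Finset.mem_univ (x n)))
  rw [Finset.mem_range, Nat.lt_succ_iff] at ha hb
  rcases hab.lt_or_gt with h | h
  · exact ⟨a, b, h, hb, hxab⟩
  · exact ⟨b, a, h, ha, hxab.symm⟩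

section MinPlus

variable {N : ℕ}

theorem mpPow_le_walkWeight (B : Matrix (Fin N) (Fin N) (WithTop ℝ)) (l : ℕ)
    (c : Fin (l + 1) → Fin N) : mpPow B l (c (Fin.last l)) (c 0) ≤ walkWeight B l c := by
  induction l with
  | zero => simp [mpPow, mpId, walkWeight, Fin.last]
  | succ l ih =>
    calc mpPow B (l + 1) (c (Fin.last (l + 1))) (c 0)
        ≤ B (c (Fin.last (l + 1))) (c (Fin.last l).castSucc)
            + mpPow B l (c (Fin.last l).castSucc) (c 0) :=
          Finset.inf_le (f := fun m => B _ m + mpPow B l m _) (Finset.mem_univ _)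
      _ ≤ B (c (Fin.last (l + 1))) (c (Fin.last l).castSucc)
            + walkWeight B l (c ∘ Fin.castSucc) := by gcongr; exact ih _
      _ = walkWeight B (l + 1) c := by
          simp only [walkWeight, Fin.sum_univ_castSucc, Fin.succ_last, Function.comp_apply]
          exact add_comm _ _

theorem le_mpPow_add_of_le_add (B : Matrix (Fin N) (Fin N) (WithTop ℝ)) (v : Fin N → ℝ)
    (hv : ∀ i j, (v i : WithTop ℝ) ≤ B i j + v j) (l : ℕ) (i j : Fin N) :
    (v i : WithTop ℝ) ≤ mpPow B l i j + v j := by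
  induction l generalizing i with
  | zero => by_cases h : i = j <;> simp [mpPow, mpId, h]
  | succ l ih =>
    rw [mpPow, mpMul, WithTop.finset_inf_add]
    refine Finset.le_inf fun m _ => ?_
    calc (v i : WithTop ℝ) ≤ B i m + v m := hv i m
      _ ≤ B i m + (mpPow B l m j + v j) := by gcongr; exact ih m
      _ = B i m + mpPow B l m j + v j := (add_assoc _ _ _).symm

theorem le_kleeneStar_add_of_le_add (B : Matrix (Fin N) (Fin N) (WithTop ℝ)) (v : Fin N → ℝ)
    (hv : ∀ i j, (v i : WithTop ℝ) ≤ B i j + v j) (i j : Fin N) :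
    (v i : WithTop ℝ) ≤ kleeneStar B i j + v j := by
  rw [kleeneStar, WithTop.finset_inf_add]
  exact Finset.le_inf fun l _ => le_mpPow_add_of_le_add B v hv l i j

variable (A : Matrix (Fin N) (Fin N) (WithTop ℝ)) (lam : ℝ) (v : Fin N → ℝ)

theorem walkWeight_add_eq_of_tight (l : ℕ) (c : Fin (l + 1) → Fin N)
    (hc : ∀ t : Fin l, A (c t.succ) (c t.castSucc) + v (c t.castSucc) = lam + v (c t.succ)) :
    walkWeight A l c + v (c 0) = ((l * lam : ℝ) : WithTop ℝ) + v (c (Fin.last l)) := by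
  induction l with
  | zero => simp [walkWeight, Fin.last]
  | succ l ih =>
    have hinit := ih (c ∘ Fin.castSucc) fun t => hc t.castSucc
    simp only [Function.comp_apply, Fin.castSucc_zero] at hinit
    calc walkWeight A (l + 1) c + v (c 0)
        = A (c (Fin.last (l + 1))) (c (Fin.last l).castSucc)
            + (walkWeight A l (c ∘ Fin.castSucc) + v (c 0)) := by
          simp only [walkWeight, Fin.sum_univ_castSucc, Fin.succ_last, Function.comp_apply]
          ac_rfl
      _ = ((l * lam : ℝ) : WithTop ℝ)
            + (A (c (Fin.last (l + 1))) (c (Fin.last l).castSucc)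
              + v (c (Fin.last l).castSucc)) := by
          rw [hinit]; ac_rfl
      _ = (((l + 1 : ℕ) * lam : ℝ) : WithTop ℝ) + v (c (Fin.last (l + 1))) := by
          rw [← Fin.succ_last, hc (Fin.last l), ← add_assoc, ← WithTop.coe_add]
          congr 2; push_cast; ring

/- The edges of `G(A)` used by `x` point from `x (n + 1)` to `x n`, so the walk runs through `x`
backwards. -/
theorem walkWeight_add_eq_of_tight_seq {x : ℕ → Fin N}
    (hx : ∀ n, A (x n) (x (n + 1)) + v (x (n + 1)) = lam + v (x n)) {l t : ℕ} (hlt : l ≤ t) :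
    walkWeight A l (fun u : Fin (l + 1) => x (t - u)) + v (x t)
      = ((l * lam : ℝ) : WithTop ℝ) + v (x (t - l)) := by
  refine walkWeight_add_eq_of_tight A lam v l _ fun u => ?_
  have hu : t - u.castSucc = t - u.succ + 1 := by simp only [Fin.val_succ, Fin.val_castSucc]; omega
  simpa only [hu] using hx (t - u.succ)

theorem isCriticalNode_of_tight_cycle {x : ℕ → Fin N}
    (hx : ∀ n, A (x n) (x (n + 1)) + v (x (n + 1)) = lam + v (x n)) {s t : ℕ} (hst : s < t)
    (hxst : x s = x t) : IsCriticalNode A lam (x s) := by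
  set c : Fin (t - s + 1) → Fin N := fun u => x (t - u)
  have hc0 : c 0 = x s := by simp [c, hxst]
  have hlast : c (Fin.last (t - s)) = x s := by simp [c, Nat.sub_sub_self hst.le]
  have hweight := walkWeight_add_eq_of_tight_seq A lam v hx (Nat.sub_le t s)
  rw [Nat.sub_sub_self hst.le, ← hxst] at hweight
  have hcircuit : walkWeight A (t - s) c = (((t - s : ℕ) * lam : ℝ) : WithTop ℝ) :=
    WithTop.add_right_cancel WithTop.coe_ne_top hweight
  have hfinite : ∀ u : Fin (t - s), A (c u.succ) (c u.castSucc) ≠ ⊤ :=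
    fun u => WithTop.sum_ne_top.1 (hcircuit ▸ WithTop.coe_ne_top) u (Finset.mem_univ u)
  exact ⟨t - s, c, by omega, ⟨rfl, hlast.trans hc0.symm, hfinite⟩, hcircuit,
    Fin.last _, hlast⟩

theorem le_normalised_add_of_eigen
    (hv : ∀ i, Finset.univ.inf (fun j => A i j + (v j : WithTop ℝ)) =
      ((lam + v i : ℝ) : WithTop ℝ))
    (i j : Fin N) : (v i : WithTop ℝ) ≤ normalised A lam i j + v j := by
  have h : ((lam + v i : ℝ) : WithTop ℝ) ≤ A i j + v j :=
    hv i ▸ Finset.inf_le (Finset.mem_univ j)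
  calc (v i : WithTop ℝ) = ((lam + v i : ℝ) : WithTop ℝ) + ((-lam : ℝ) : WithTop ℝ) := by
        norm_cast; ring_nf
    _ ≤ A i j + v j + ((-lam : ℝ) : WithTop ℝ) := by gcongr
    _ = normalised A lam i j + v j := add_right_comm _ _ _

theorem exists_tight_of_eigen
    (hv : ∀ i, Finset.univ.inf (fun j => A i j + (v j : WithTop ℝ)) =
      ((lam + v i : ℝ) : WithTop ℝ))
    (i : Fin N) : ∃ j, A i j + v j = lam + v i := by
  obtain ⟨j, -, hj⟩ := Finset.exists_mem_eq_inf Finset.univ ⟨i, Finset.mem_univ i⟩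
    fun j => A i j + (v j : WithTop ℝ)
  exact ⟨j, by rw [← hj, hv i, WithTop.coe_add]⟩

theorem normalised_add_of_tight {i j : Fin N} (h : A i j + v j = lam + v i) :
    normalised A lam i j + v j = v i := by
  rw [normalised, add_right_comm, h, add_right_comm, ← WithTop.coe_add, add_neg_cancel,
    WithTop.coe_zero, zero_add]

theorem exists_isCriticalNode_add_kleeneStar_le
    (hv : ∀ i, Finset.univ.inf (fun j => A i j + (v j : WithTop ℝ)) =
      ((lam + v i : ℝ) : WithTop ℝ))
    (k : Fin N) :
    ∃ i, IsCriticalNode A lam i ∧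
      (v i : WithTop ℝ) + kleeneStar (normalised A lam) k i ≤ v k := by
  choose f hf using exists_tight_of_eigen A lam v hv
  set x : ℕ → Fin N := fun n => f^[n] k
  have hx : ∀ n, A (x n) (x (n + 1)) + v (x (n + 1)) = lam + v (x n) := fun n => by
    simp only [x, Function.iterate_succ_apply']
    exact hf _
  have hxB : ∀ n, normalised A lam (x n) (x (n + 1)) + v (x (n + 1))
      = ((0 : ℝ) : WithTop ℝ) + v (x n) := fun n => by
    rw [WithTop.coe_zero, zero_add]
    exact normalised_add_of_tight A lam v (hx n)
  obtain ⟨s, t, hst, htN, hxst⟩ := Fintype.exists_lt_le_card_apply_eq x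
  rw [Fintype.card_fin] at htN
  refine ⟨x s, isCriticalNode_of_tight_cycle A lam v hx hst hxst, ?_⟩
  set c : Fin (s + 1) → Fin N := fun u => x (s - u)
  have hpath := mpPow_le_walkWeight (normalised A lam) s c
  have hweight := walkWeight_add_eq_of_tight_seq (normalised A lam) 0 v hxB (le_refl s)
  simp only [c, Fin.val_last, Nat.sub_self, Fin.val_zero, Nat.sub_zero] at hpath
  simp only [Nat.sub_self, mul_zero, WithTop.coe_zero, zero_add] at hweight
  calc (v (x s) : WithTop ℝ) + kleeneStar (normalised A lam) k (x s)
      ≤ v (x s) + walkWeight (normalised A lam) s c := by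
        gcongr
        exact (Finset.inf_le (Finset.mem_range.2 (by omega))).trans hpath
    _ = v k := (add_comm _ _).trans hweight

end MinPlus

open scoped Classical in
theorem eigenvector_is_tropical_combination_of_critical_columns_general {N : ℕ}
    (A : Matrix (Fin N) (Fin N) (WithTop ℝ))
    (lam : ℝ) :
    ∀ v : Fin N → ℝ,
      (∀ i : Fin N,
        Finset.univ.inf (fun j => A i j + (v j : WithTop ℝ)) =
          ((lam + v i : ℝ) : WithTop ℝ)) →
      ∃ a : Fin N → ℝ, ∀ k : Fin N,
        (v k : WithTop ℝ) =
          Finset.univ.inf (fun i =>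
            if IsCriticalNode A lam i then
              ((a i : ℝ) : WithTop ℝ) + kleeneStar (normalised A lam) k i
            else ⊤) := by
  intro v hv
  refine ⟨v, fun k => le_antisymm (Finset.le_inf fun i _ => ?_) ?_⟩
  · split_ifs
    · rw [add_comm]
      exact le_kleeneStar_add_of_le_add _ v (le_normalised_add_of_eigen A lam v hv) k i
    · exact le_top
  · obtain ⟨i, hi, hle⟩ := exists_isCriticalNode_add_kleeneStar_le A lam v hv k
    exact (Finset.inf_le (Finset.mem_univ i)).trans (by rwa [if_pos hi])

open scoped Classical in
/-- for irreducible `A` (graph containing a circuit) with minimum average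
circuit weight `lam`, every finite min-plus eigenvector of `A` is a tropical linear
combination of the critical columns of the Kleene star of the normalised matrix `Â`. -/
theorem eigenvector_is_tropical_combination_of_critical_columns {N : ℕ}
    (A : Matrix (Fin N) (Fin N) (WithTop ℝ))
    (hirr : ∀ i j : Fin N, ∃ (l : ℕ) (p : Fin (l + 1) → Fin N), IsWalk A l p i j)
    (lam : ℝ)
    (hlb : ∀ (m : ℕ) (i : Fin N) (c : Fin (m + 1) → Fin N), 1 ≤ m → IsWalk A m c i i →
      (((m : ℝ) * lam : ℝ) : WithTop ℝ) ≤ walkWeight A m c)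
    (hmin : ∃ (m : ℕ) (i : Fin N) (c : Fin (m + 1) → Fin N), 1 ≤ m ∧ IsWalk A m c i i ∧
      walkWeight A m c = (((m : ℝ) * lam : ℝ) : WithTop ℝ)) :
    ∀ v : Fin N → ℝ,
      (∀ i : Fin N,
        Finset.univ.inf (fun j => A i j + (v j : WithTop ℝ)) =
          ((lam + v i : ℝ) : WithTop ℝ)) →
      ∃ a : Fin N → ℝ, ∀ k : Fin N,
        (v k : WithTop ℝ) =
          Finset.univ.inf (fun i =>
            if IsCriticalNode A lam i then
              ((a i : ℝ) : WithTop ℝ) + kleeneStar (normalised A lam) k i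
            else ⊤) :=
  eigenvector_is_tropical_combination_of_critical_columns_general A lam
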